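/- arXiv:1309.4196 — 2 statements merged into one kernel-verified Lean document; each statement's English description precedes it below -/
import Mathlib

section
/- Let $n \geq 1$, $0 < \alpha < n$, $r, s > 1$ with $\frac{1}{r} + \frac{1}{s} + \frac{n-\alpha}{n} = 2$. Suppose the continuous Hardy-Littlewood-Sobolev inequality holds: $\int_{\mathbb{R}^n}\int_{\mathbb{R}^n} \frac{|f(x)g(y)|}{|x-y|^{n-\alpha}}\,dx\,dy \leq C' \|f\|_{L^r}\|g\|_{L^s}$ for all $f \in L^r(\mathbb{R}^n)$, $g \in L^s(\mathbb{R}^n)$. Then the discrete Hardy-Littlewood-Sobolev inequality holds: there exists $C > 0$ such that $\sum_{i \neq j, i,j \in \mathbb{Z}^n} \frac{|f_i||g_j|}{|i-j|^{n-\alpha}} \leq C \|f\|_{\ell^r}\|g\|_{\ell^s}$ for all $f \in \ell^r(\mathbb{Z}^n)$ and $g \in \ell^s(\mathbb{Z}^n)$. -/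
open scoped BigOperators
open Filter MeasureTheory

/-- Euclidean norm of a lattice point in `ℤ^n`. -/
noncomputable def znorm {n : ℕ} (v : Fin n → ℤ) : ℝ :=
  ‖(WithLp.equiv 2 (Fin n → ℝ)).symm (fun t => (v t : ℝ))‖

/-- The `ℓ^p` norm of a sequence indexed by `ℤ^n`. -/
noncomputable def lpNorm {n : ℕ} (f : (Fin n → ℤ) → ℝ) (p : ℝ) : ℝ :=
  (∑' i, |f i| ^ p) ^ (1 / p)

/-- The discrete HLS bilinear functional. -/
noncomputable def J {n : ℕ} (α : ℝ) (f g : (Fin n → ℤ) → ℝ) : ℝ :=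
  ∑' i, ∑' j, if j ≠ i then f i * g j / znorm (i - j) ^ ((n : ℝ) - α) else 0

/-!
Extend the sequences `f, g` (restricted to a finite set `A` of lattice points) to step functions
that are constant on the unit cubes `i + [0,1)^n`. The cubes are disjoint and have volume one, so
the step functions have the same `L^p` norms as the truncated sequences. For `i ≠ j`, points
`x, y` of the cubes at `i, j` satisfy `‖x - y‖ ≤ |i - j| + 2√n ≤ (1 + 2√n) |i - j|`, so the
lattice kernel is at most `(1 + 2√n)^(n-α)` times the continuous one. Integrating over the cubes,
the discrete double sum is bounded by that constant times the continuous HLS form of the step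
functions, to which the hypothesis applies.
-/

namespace DiscreteHLS

variable {ι : Type*}

noncomputable def cube (i : ι → ℤ) : Set (EuclideanSpace ℝ ι) :=
  (MeasurableEquiv.toLp 2 (ι → ℝ)).symm ⁻¹'
    Set.univ.pi fun t => Set.Ico (i t : ℝ) (i t + 1)

lemma mem_cube {i : ι → ℤ} {x : EuclideanSpace ℝ ι} :
    x ∈ cube i ↔ ∀ t, (i t : ℝ) ≤ x t ∧ x t < i t + 1 := by
  simp [cube, Set.mem_pi, Set.mem_Ico]

lemma pairwise_disjoint_cube : Pairwise fun i j : ι → ℤ => Disjoint (cube i) (cube j) := by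
  intro i j hij
  obtain ⟨t, ht⟩ := Function.ne_iff.mp hij
  refine Set.disjoint_left.mpr fun x hxi hxj => ?_
  have hi := mem_cube.mp hxi t
  have hj := mem_cube.mp hxj t
  rcases lt_or_gt_of_ne ht with h | h
  · have : (i t : ℝ) + 1 ≤ j t := by exact_mod_cast h
    linarith
  · have : (j t : ℝ) + 1 ≤ i t := by exact_mod_cast h
    linarith

lemma sum_indicator_cube_of_mem {M : Type*} [AddCommMonoid M] {A : Finset (ι → ℤ)}
    {d : (ι → ℤ) → M} {i : ι → ℤ} (hi : i ∈ A) {x : EuclideanSpace ℝ ι} (hx : x ∈ cube i) :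
    ∑ j ∈ A, (cube j).indicator (fun _ => d j) x = d i := by
  rw [Finset.sum_eq_single_of_mem i hi fun j _ hji =>
    Set.indicator_of_notMem (Set.disjoint_right.mp (pairwise_disjoint_cube hji) hx) _]
  exact Set.indicator_of_mem hx _

noncomputable def stepFun (c : (ι → ℤ) → ℝ) (A : Finset (ι → ℤ)) :
    EuclideanSpace ℝ ι → ℝ :=
  fun x => ∑ i ∈ A, (cube i).indicator (fun _ => c i) x

lemma stepFun_eq_of_mem_cube {c : (ι → ℤ) → ℝ} {A : Finset (ι → ℤ)} {i : ι → ℤ} (hi : i ∈ A)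
    {x : EuclideanSpace ℝ ι} (hx : x ∈ cube i) : stepFun c A x = c i :=
  sum_indicator_cube_of_mem hi hx

lemma enorm_stepFun_rpow {c : (ι → ℤ) → ℝ} {A : Finset (ι → ℤ)} {p : ℝ} (hp : 0 < p)
    (x : EuclideanSpace ℝ ι) :
    ‖stepFun c A x‖ₑ ^ p = ∑ i ∈ A, (cube i).indicator (fun _ => ‖c i‖ₑ ^ p) x := by
  by_cases h : ∃ i ∈ A, x ∈ cube i
  · obtain ⟨i, hi, hx⟩ := h
    rw [stepFun_eq_of_mem_cube hi hx, sum_indicator_cube_of_mem hi hx]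
  · have hzero : ∀ {M : Type} [AddCommMonoid M] (d : (ι → ℤ) → M),
        ∑ i ∈ A, (cube i).indicator (fun _ => d i) x = 0 := fun d =>
      Finset.sum_eq_zero fun i hi => Set.indicator_of_notMem (fun hx => h ⟨i, hi, hx⟩) _
    rw [stepFun, hzero, hzero, enorm_zero, ENNReal.zero_rpow_of_pos hp]

noncomputable def latticePoint (v : ι → ℤ) : EuclideanSpace ℝ ι :=
  WithLp.toLp 2 fun t => (v t : ℝ)

lemma latticePoint_sub (i j : ι → ℤ) :
    latticePoint (i - j) = latticePoint i - latticePoint j := by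
  ext t
  simp [latticePoint]

variable [Fintype ι]

lemma measurableSet_cube (i : ι → ℤ) : MeasurableSet (cube i) :=
  (MeasurableEquiv.toLp 2 (ι → ℝ)).symm.measurable
    (MeasurableSet.univ_pi fun _ => measurableSet_Ico)

lemma volume_cube (i : ι → ℤ) : volume (cube i) = 1 := by
  rw [cube, (EuclideanSpace.volume_preserving_symm_measurableEquiv_toLp ι).measure_preimage
    (MeasurableSet.univ_pi fun _ => measurableSet_Ico).nullMeasurableSet]
  simp [volume_pi_pi, Real.volume_Ico]

lemma sum_le_lintegral_of_le_on_cubes {A : Finset (ι → ℤ)} {a : (ι → ℤ) → ENNReal}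
    {φ : EuclideanSpace ℝ ι → ENNReal} (h : ∀ i ∈ A, ∀ x ∈ cube i, a i ≤ φ x) :
    ∑ i ∈ A, a i ≤ ∫⁻ x, φ x :=
  calc ∑ i ∈ A, a i = ∑ i ∈ A, ∫⁻ _ in cube i, a i := by
        simp only [setLIntegral_const, volume_cube, mul_one]
    _ ≤ ∑ i ∈ A, ∫⁻ x in cube i, φ x :=
        Finset.sum_le_sum fun i hi => setLIntegral_mono' (measurableSet_cube i) (h i hi)
    _ = ∫⁻ x in ⋃ i ∈ A, cube i, φ x :=
        (lintegral_biUnion_finset (fun i _ j _ hij => pairwise_disjoint_cube hij)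
          (fun i _ => measurableSet_cube i) φ).symm
    _ ≤ ∫⁻ x, φ x := setLIntegral_le_lintegral _ _

lemma sum_sum_le_lintegral_lintegral_of_le_on_cubes {A : Finset (ι → ℤ)}
    {a : (ι → ℤ) → (ι → ℤ) → ENNReal} {Φ : EuclideanSpace ℝ ι → EuclideanSpace ℝ ι → ENNReal}
    (h : ∀ i ∈ A, ∀ x ∈ cube i, ∀ j ∈ A, ∀ y ∈ cube j, a i j ≤ Φ x y) :
    ∑ i ∈ A, ∑ j ∈ A, a i j ≤ ∫⁻ x, ∫⁻ y, Φ x y :=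
  sum_le_lintegral_of_le_on_cubes fun i hi x hx =>
    sum_le_lintegral_of_le_on_cubes fun j hj y hy => h i hi x hx j hj y hy

lemma memLp_stepFun (c : (ι → ℤ) → ℝ) (A : Finset (ι → ℤ)) (p : ENNReal) :
    MemLp (stepFun c A) p volume :=
  memLp_finsetSum _ fun i _ => memLp_indicator_const p (measurableSet_cube i) _
    (Or.inr (by simp [volume_cube]))

lemma eLpNorm_stepFun {c : (ι → ℤ) → ℝ} {A : Finset (ι → ℤ)} {p : ℝ} (hp : 0 < p) :
    eLpNorm (stepFun c A) (ENNReal.ofReal p) volume = (∑ i ∈ A, ‖c i‖ₑ ^ p) ^ (1 / p) := by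
  rw [eLpNorm_eq_lintegral_rpow_enorm_toReal (by simpa using hp) ENNReal.ofReal_ne_top,
    ENNReal.toReal_ofReal hp.le]
  simp_rw [enorm_stepFun_rpow hp]
  rw [lintegral_finsetSum _ fun i _ => measurable_const.indicator (measurableSet_cube i)]
  simp only [lintegral_indicator (measurableSet_cube _), setLIntegral_const, volume_cube,
    mul_one]

lemma one_le_norm_latticePoint {v : ι → ℤ} (hv : v ≠ 0) : 1 ≤ ‖latticePoint v‖ := by
  obtain ⟨t, ht⟩ := Function.ne_iff.mp hv
  calc (1 : ℝ) ≤ |(v t : ℝ)| := by exact_mod_cast Int.one_le_abs ht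
    _ = ‖(latticePoint v) t‖ := (Real.norm_eq_abs _).symm
    _ ≤ ‖latticePoint v‖ := PiLp.norm_apply_le _ t

lemma norm_sub_latticePoint_le {i : ι → ℤ} {x : EuclideanSpace ℝ ι} (hx : x ∈ cube i) :
    ‖x - latticePoint i‖ ≤ √(Fintype.card ι) := by
  rw [EuclideanSpace.norm_eq]
  refine Real.sqrt_le_sqrt ?_
  calc ∑ t, ‖(x - latticePoint i) t‖ ^ 2 ≤ ∑ _t : ι, (1 : ℝ) := by
        refine Finset.sum_le_sum fun t _ => ?_
        have h := mem_cube.mp hx t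
        have happ : (x - latticePoint i) t = x t - i t := rfl
        rw [happ, Real.norm_eq_abs, sq_abs]
        nlinarith
    _ = Fintype.card ι := by simp

lemma norm_sub_le_of_mem_cube {i j : ι → ℤ} (hij : i ≠ j) {x y : EuclideanSpace ℝ ι}
    (hx : x ∈ cube i) (hy : y ∈ cube j) :
    ‖x - y‖ ≤ (1 + 2 * √(Fintype.card ι)) * ‖latticePoint (i - j)‖ := by
  have hone := one_le_norm_latticePoint (sub_ne_zero_of_ne hij)
  have hsqrt := Real.sqrt_nonneg (Fintype.card ι)
  calc ‖x - y‖ = ‖(x - latticePoint i) + latticePoint (i - j) - (y - latticePoint j)‖ := by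
        rw [latticePoint_sub]; abel_nf
    _ ≤ ‖x - latticePoint i‖ + ‖latticePoint (i - j)‖ + ‖y - latticePoint j‖ :=
        norm_sub_le_of_le (norm_add_le _ _) le_rfl
    _ ≤ √(Fintype.card ι) + ‖latticePoint (i - j)‖ + √(Fintype.card ι) := by
        gcongr
        exacts [norm_sub_latticePoint_le hx, norm_sub_latticePoint_le hy]
    _ ≤ (1 + 2 * √(Fintype.card ι)) * ‖latticePoint (i - j)‖ := by nlinarith

lemma div_rpow_norm_latticePoint_le {β : ℝ} (hβ : 0 ≤ β) {a : ℝ} (ha : 0 ≤ a) {i j : ι → ℤ}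
    (hij : i ≠ j) {x y : EuclideanSpace ℝ ι} (hx : x ∈ cube i) (hy : y ∈ cube j) :
    a / ‖latticePoint (i - j)‖ ^ β ≤ (1 + 2 * √(Fintype.card ι)) ^ β * (a / ‖x - y‖ ^ β) := by
  have hxy : 0 < ‖x - y‖ := norm_sub_pos_iff.mpr fun h =>
    Set.disjoint_left.mp (pairwise_disjoint_cube hij) hx (h ▸ hy)
  have hK : 0 < (1 + 2 * √(Fintype.card ι)) ^ β := by positivity
  have hz : 0 < ‖latticePoint (i - j)‖ :=
    one_pos.trans_le (one_le_norm_latticePoint (sub_ne_zero_of_ne hij))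
  have hle : ‖x - y‖ ^ β ≤ (1 + 2 * √(Fintype.card ι)) ^ β * ‖latticePoint (i - j)‖ ^ β := by
    rw [← Real.mul_rpow (by positivity) hz.le]
    exact Real.rpow_le_rpow hxy.le (norm_sub_le_of_mem_cube hij hx hy) hβ
  calc a / ‖latticePoint (i - j)‖ ^ β
      = (1 + 2 * √(Fintype.card ι)) ^ β * a
          / ((1 + 2 * √(Fintype.card ι)) ^ β * ‖latticePoint (i - j)‖ ^ β) :=
        (mul_div_mul_left _ _ hK.ne').symm
    _ ≤ (1 + 2 * √(Fintype.card ι)) ^ β * a / ‖x - y‖ ^ β :=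
        div_le_div_of_nonneg_left (by positivity) (by positivity) hle
    _ = (1 + 2 * √(Fintype.card ι)) ^ β * (a / ‖x - y‖ ^ β) := mul_div_assoc _ _ _

variable {n : ℕ}

lemma znorm_eq_norm_latticePoint (v : Fin n → ℤ) : znorm v = ‖latticePoint v‖ := rfl

lemma lpNorm_nonneg (f : (Fin n → ℤ) → ℝ) (p : ℝ) : 0 ≤ lpNorm f p :=
  Real.rpow_nonneg (tsum_nonneg fun _ => Real.rpow_nonneg (abs_nonneg _) p) _

lemma eLpNorm_stepFun_le_lpNorm {f : (Fin n → ℤ) → ℝ} (A : Finset (Fin n → ℤ)) {p : ℝ}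
    (hp : 0 < p) (hf : Summable fun i => |f i| ^ p) :
    eLpNorm (stepFun f A) (ENNReal.ofReal p) volume ≤ ENNReal.ofReal (lpNorm f p) := by
  rw [eLpNorm_stepFun hp, _root_.lpNorm, ← ENNReal.ofReal_rpow_of_nonneg
    (tsum_nonneg fun _ => by positivity) (by positivity),
    ENNReal.ofReal_tsum_of_nonneg (fun _ => by positivity) hf]
  gcongr
  simp only [Real.enorm_eq_ofReal_abs, ENNReal.ofReal_rpow_of_nonneg (abs_nonneg _) hp.le]
  exact ENNReal.sum_le_tsum A

lemma ofReal_sum_sum_le_lintegral_stepFun {β : ℝ} (hβ : 0 ≤ β) (f g : (Fin n → ℤ) → ℝ)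
    (A : Finset (Fin n → ℤ)) :
    ENNReal.ofReal (∑ i ∈ A, ∑ j ∈ A,
        if j ≠ i then |f i| * |g j| / znorm (i - j) ^ β else 0)
      ≤ ENNReal.ofReal ((1 + 2 * √n) ^ β) *
        ∫⁻ x, ∫⁻ y, ENNReal.ofReal (|stepFun f A x| * |stepFun g A y| / ‖x - y‖ ^ β) := by
  simp only [znorm_eq_norm_latticePoint]
  have hterm : ∀ i j : Fin n → ℤ,
      0 ≤ if j ≠ i then |f i| * |g j| / ‖latticePoint (i - j)‖ ^ β else 0 := by
    intro i j; split_ifs <;> positivity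
  rw [ENNReal.ofReal_sum_of_nonneg fun i _ => Finset.sum_nonneg fun j _ => hterm i j,
    ← lintegral_const_mul' _ _ ENNReal.ofReal_ne_top]
  simp_rw [ENNReal.ofReal_sum_of_nonneg fun j _ => hterm _ j,
    ← lintegral_const_mul' _ _ ENNReal.ofReal_ne_top]
  refine sum_sum_le_lintegral_lintegral_of_le_on_cubes fun i hi x hx j hj y hy => ?_
  rw [← ENNReal.ofReal_mul (by positivity)]
  refine ENNReal.ofReal_le_ofReal ?_
  split_ifs with hji
  · rw [stepFun_eq_of_mem_cube hi hx, stepFun_eq_of_mem_cube hj hy]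
    simpa using div_rpow_norm_latticePoint_le hβ (by positivity) (Ne.symm hji) hx hy
  · positivity

end DiscreteHLS

open DiscreteHLS in
theorem stmt_2_general {n : ℕ} (α r s C' : ℝ)
    (hαn : α < n) (hr : 1 < r) (hs : 1 < s) (hC' : 0 < C')
    (hHLS : ∀ f g : EuclideanSpace ℝ (Fin n) → ℝ,
      MemLp f (ENNReal.ofReal r) volume → MemLp g (ENNReal.ofReal s) volume →
      ∫⁻ x, ∫⁻ y, ENNReal.ofReal (|f x| * |g y| / ‖x - y‖ ^ ((n : ℝ) - α))
        ≤ ENNReal.ofReal C' * eLpNorm f (ENNReal.ofReal r) volume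
            * eLpNorm g (ENNReal.ofReal s) volume) :
    ∃ C > 0, ∀ f g : (Fin n → ℤ) → ℝ,
      Summable (fun i => |f i| ^ r) → Summable (fun i => |g i| ^ s) →
      ∀ A : Finset (Fin n → ℤ),
        ∑ i ∈ A, ∑ j ∈ A,
            (if j ≠ i then |f i| * |g j| / znorm (i - j) ^ ((n : ℝ) - α) else 0)
          ≤ C * lpNorm f r * lpNorm g s := by
  set K := (1 + 2 * √n) ^ ((n : ℝ) - α)
  have hK : 0 ≤ K := by positivity
  refine ⟨C' * K, by positivity, fun f g hf hg A => ?_⟩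
  have hf' := lpNorm_nonneg f r
  have hg' := lpNorm_nonneg g s
  refine (ENNReal.ofReal_le_ofReal_iff (by positivity)).1 ?_
  calc _ ≤ ENNReal.ofReal K * ∫⁻ x, ∫⁻ y, ENNReal.ofReal
          (|stepFun f A x| * |stepFun g A y| / ‖x - y‖ ^ ((n : ℝ) - α)) :=
        ofReal_sum_sum_le_lintegral_stepFun (by linarith) f g A
    _ ≤ ENNReal.ofReal K * (ENNReal.ofReal C' * eLpNorm (stepFun f A) (ENNReal.ofReal r) volume
          * eLpNorm (stepFun g A) (ENNReal.ofReal s) volume) := by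
        gcongr
        exact hHLS _ _ (memLp_stepFun f A _) (memLp_stepFun g A _)
    _ ≤ ENNReal.ofReal K * (ENNReal.ofReal C' * ENNReal.ofReal (lpNorm f r)
          * ENNReal.ofReal (lpNorm g s)) := by
        gcongr
        exacts [eLpNorm_stepFun_le_lpNorm A (by linarith) hf,
          eLpNorm_stepFun_le_lpNorm A (by linarith) hg]
    _ = ENNReal.ofReal (C' * K * lpNorm f r * lpNorm g s) := by
        rw [← ENNReal.ofReal_mul hC'.le, ← ENNReal.ofReal_mul (by positivity),
          ← ENNReal.ofReal_mul hK]
        ring_nf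

theorem stmt_2 {n : ℕ} (hn : 1 ≤ n) (α r s C' : ℝ)
    (hα0 : 0 < α) (hαn : α < n) (hr : 1 < r) (hs : 1 < s)
    (hcrit : 1 / r + 1 / s + ((n : ℝ) - α) / n = 2) (hC' : 0 < C')
    (hHLS : ∀ f g : EuclideanSpace ℝ (Fin n) → ℝ,
      MemLp f (ENNReal.ofReal r) volume → MemLp g (ENNReal.ofReal s) volume →
      ∫⁻ x, ∫⁻ y, ENNReal.ofReal (|f x| * |g y| / ‖x - y‖ ^ ((n : ℝ) - α))
        ≤ ENNReal.ofReal C' * eLpNorm f (ENNReal.ofReal r) volume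
            * eLpNorm g (ENNReal.ofReal s) volume) :
    ∃ C > 0, ∀ f g : (Fin n → ℤ) → ℝ,
      Summable (fun i => |f i| ^ r) → Summable (fun i => |g i| ^ s) →
      ∀ A : Finset (Fin n → ℤ),
        ∑ i ∈ A, ∑ j ∈ A,
            (if j ≠ i then |f i| * |g j| / znorm (i - j) ^ ((n : ℝ) - α) else 0)
          ≤ C * lpNorm f r * lpNorm g s :=
  stmt_2_general α r s C' hαn hr hs hC' hHLS
end

section
/- Let $n \geq 1$, $0 < \alpha < n$, $r, s > 1$ with $\frac{1}{r} + \frac{1}{s} + \frac{n-\alpha}{n} > 2$, and define $\epsilon \in (0,1)$ by $2 + \frac{\epsilon}{s} = \frac{1}{r} + \frac{1}{s} + \frac{n-\alpha}{n}$. Suppose nonnegative sequences $f, g$ supported in $\{|i| \leq N\}$ with $\|f\|_{\ell^r} = \|g\|_{\ell^s} = 1$ satisfy the Euler–Lagrange equations $f_i^{r-1} = \sum_{j \neq i} \frac{g_j}{|i-j|^{n-\alpha}}$ for all $|i| \leq N$ (and symmetrically for $g$), and suppose the discrete HLS operator $T$ defined by $(Th)_i = \sum_{j \neq i} \frac{h_j}{|i-j|^{n-\alpha}}$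 is bounded from $\ell^{s/(1-\epsilon)}(\mathbb{Z}^n)$ to $\ell^{r/(r-1)}(\mathbb{Z}^n)$ with norm $\leq C$. Then $\max_{|k| \leq N} g_k \geq C^{-1/\epsilon}$; in particular the maximum of $g$ is bounded below by a positive constant independent of $N$. -/
/-!
Let `M = g k` be the maximum of `g` and `G = g ^ (1 - ε)`. Since `g ≤ M ^ ε * G`, the Euler–Lagrange
equation for `f` gives `f ^ (r - 1) ≤ M ^ ε * T G` pointwise. Taking `ℓ^{r/(r-1)}` norms,
`1 = ‖f ^ (r - 1)‖ ≤ M ^ ε * ‖T G‖ ≤ M ^ ε * C * ‖G‖_{s/(1-ε)} = M ^ ε * C`, so `M ≥ C ^ (-1/ε)`.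
The middle step needs `T G ∈ ℓ^{r/(r-1)}` (otherwise the `tsum` defining its norm is junk): `T G` is a
finite combination of translates of `|x| ^ (α - n)`, which lies in `ℓ^{r/(r-1)}(ℤⁿ)` because the
HLS gap condition gives `(n - α) * r / (r - 1) > n`.
-/

open scoped BigOperators
open Filter MeasureTheory

lemma le_rpow_mul_rpow_one_sub {x M ε : ℝ} (hx : 0 ≤ x) (hxM : x ≤ M) (hε : 0 ≤ ε) :
    x ≤ M ^ ε * x ^ (1 - ε) := by
  rcases hx.eq_or_lt with rfl | hx
  · exact mul_nonneg (Real.rpow_nonneg (by positivity) _) (Real.rpow_nonneg le_rfl _)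
  calc x = x ^ ε * x ^ (1 - ε) := by rw [← Real.rpow_add hx, add_sub_cancel, Real.rpow_one]
    _ ≤ M ^ ε * x ^ (1 - ε) := by gcongr

lemma lt_sub_mul_div_sub_one {n α r s : ℝ} (hn : 0 < n) (hr : 1 < r) (hs : 1 < s)
    (h : 1 / r + 1 / s + (n - α) / n > 2) : n < (n - α) * (r / (r - 1)) := by
  have h1s : 1 / s < 1 := (div_lt_one (by linarith)).mpr hs
  have hr' : 0 < r - 1 := by linarith
  have key : (r - 1) / r < (n - α) / n := by
    rw [sub_div, div_self (by positivity)]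
    linarith
  rw [div_lt_div_iff₀ (by positivity) hn] at key
  rw [← mul_div_assoc, lt_div_iff₀ hr']
  linarith

lemma rpow_neg_one_div_le_of_one_le_rpow_mul {C M ε : ℝ} (hC : 0 < C) (hM : 0 ≤ M) (hε : 0 < ε)
    (h : 1 ≤ M ^ ε * C) : C ^ (-(1 / ε)) ≤ M := by
  have hCM : C⁻¹ ≤ M ^ ε := by rwa [inv_le_iff_one_le_mul₀ hC]
  calc C ^ (-(1 / ε)) = C⁻¹ ^ (1 / ε) := by rw [Real.rpow_neg hC.le, Real.inv_rpow hC.le]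
    _ ≤ (M ^ ε) ^ (1 / ε) := by gcongr
    _ = M := by rw [← Real.rpow_mul hM, mul_one_div_cancel hε.ne', Real.rpow_one]

lemma Finset.exists_mem_forall_le_of_forall_notMem_eq_zero {α : Type*} {K : Finset α}
    (hK : K.Nonempty) {g : α → ℝ} (hg : ∀ j, 0 ≤ g j) (hgK : ∀ j ∉ K, g j = 0) :
    ∃ k ∈ K, ∀ j, g j ≤ g k := by
  obtain ⟨k, hk, hmax⟩ := K.exists_max_image g hK
  refine ⟨k, hk, fun j => ?_⟩
  by_cases hj : j ∈ K
  · exact hmax j hj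
  · rw [hgK j hj]
    exact hg k

section

variable {n : ℕ}

@[simp]
lemma znorm_zero : znorm (0 : Fin n → ℤ) = 0 := by
  simp [znorm, ← Pi.zero_def]

lemma znorm_nonneg (v : Fin n → ℤ) : 0 ≤ znorm v := norm_nonneg _

lemma abs_apply_le_znorm (v : Fin n → ℤ) (t : Fin n) : |(v t : ℝ)| ≤ znorm v := by
  simpa [znorm] using PiLp.norm_apply_le ((WithLp.equiv 2 (Fin n → ℝ)).symm fun t => (v t : ℝ)) t

lemma finite_setOf_znorm_le (N : ℕ) : {v : Fin n → ℤ | znorm v ≤ N}.Finite := by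
  refine (Set.finite_Icc (fun _ => -(N : ℤ)) fun _ => (N : ℤ)).subset fun v hv => ?_
  have hle : ∀ t, |v t| ≤ N := fun t => by
    have : |(v t : ℝ)| ≤ N := (abs_apply_le_znorm v t).trans hv
    exact_mod_cast this
  exact ⟨fun t => (abs_le.mp (hle t)).1, fun t => (abs_le.mp (hle t)).2⟩

variable (n) in
noncomputable def znormBall (N : ℕ) : Finset (Fin n → ℤ) :=
  (finite_setOf_znorm_le N).toFinset

@[simp]
lemma mem_znormBall {N : ℕ} {v : Fin n → ℤ} : v ∈ znormBall n N ↔ znorm v ≤ N :=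
  Set.Finite.mem_toFinset _

/-- `ℤⁿ` is the lattice spanned by the standard basis of `EuclideanSpace ℝ (Fin n)`, so this is
`ZLattice.summable_norm_rpow`. -/
lemma summable_znorm_rpow_neg {β : ℝ} (hβ : (n : ℝ) < β) :
    Summable fun v : Fin n → ℤ => znorm v ^ (-β) := by
  let b := (EuclideanSpace.basisFun (Fin n) ℝ).toBasis
  let bℤ := b.restrictScalars ℤ
  have hrank : Module.finrank ℤ (Submodule.span ℤ (Set.range b)) = n := by
    simp [Module.finrank_eq_card_basis bℤ]
  have hL := ZLattice.summable_norm_rpow (L := Submodule.span ℤ (Set.range b)) (-β)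
    (by rw [hrank]; linarith)
  refine (bℤ.equivFun.symm.toEquiv.summable_iff.mpr hL).congr fun v => ?_
  rw [Function.comp_apply, znorm, ← Submodule.norm_coe]
  congr 2
  ext t
  rw [LinearEquiv.coe_toEquiv]
  have h := b.restrictScalars_repr_apply (R := ℤ) (bℤ.equivFun.symm v) t
  rw [← Module.Basis.equivFun_apply, LinearEquiv.apply_symm_apply] at h
  simpa [bℤ, b] using h.symm

lemma lpNorm_rpow_comp {f : (Fin n → ℤ) → ℝ} (hf : ∀ i, 0 ≤ f i) {a p : ℝ} (ha : 0 < a)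
    (hp : 0 < p) : _root_.lpNorm (fun i => f i ^ a) (p / a) = _root_.lpNorm f p ^ a := by
  have hsum : ∑' i, |f i ^ a| ^ (p / a) = ∑' i, |f i| ^ p := by
    refine tsum_congr fun i => ?_
    rw [abs_of_nonneg (Real.rpow_nonneg (hf i) a), abs_of_nonneg (hf i), ← Real.rpow_mul (hf i),
      mul_div_cancel₀ p ha.ne']
  rw [_root_.lpNorm, _root_.lpNorm, hsum, ← Real.rpow_mul (tsum_nonneg fun i => by positivity)]
  congr 1
  field_simp

lemma lpNorm_const_mul (f : (Fin n → ℤ) → ℝ) {c p : ℝ} (hc : 0 ≤ c) (hp : 0 < p) :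
    _root_.lpNorm (fun i => c * f i) p = c * _root_.lpNorm f p := by
  simp only [_root_.lpNorm, abs_mul, abs_of_nonneg hc, Real.mul_rpow hc (abs_nonneg _),
    tsum_mul_left]
  rw [Real.mul_rpow (by positivity) (tsum_nonneg fun i => by positivity), one_div,
    Real.rpow_rpow_inv hc hp.ne']

lemma lpNorm_le_lpNorm {u v : (Fin n → ℤ) → ℝ} {p : ℝ} (hp : 0 < p) (hu : ∀ i, 0 ≤ u i)
    (huv : ∀ i, u i ≤ v i) (hv : Summable fun i => |v i| ^ p) : _root_.lpNorm u p ≤ _root_.lpNorm v p := by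
  have hle : ∀ i, |u i| ^ p ≤ |v i| ^ p := fun i => by
    refine Real.rpow_le_rpow (abs_nonneg _) ?_ hp.le
    rw [abs_of_nonneg (hu i), abs_of_nonneg ((hu i).trans (huv i))]
    exact huv i
  refine Real.rpow_le_rpow (tsum_nonneg fun i => by positivity) ?_ (by positivity)
  exact (hv.of_nonneg_of_le (fun i => by positivity) hle).tsum_le_tsum hle hv

/-- The operator `T` of the paper, with `β = n - α`. -/
noncomputable def hlsOperator (β : ℝ) (h : (Fin n → ℤ) → ℝ) (i : Fin n → ℤ) : ℝ :=
  ∑' j, if j ≠ i then h j / znorm (i - j) ^ β else 0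

def HLSBounded (n : ℕ) (β p q C : ℝ) : Prop :=
  ∀ h : (Fin n → ℤ) → ℝ, (∀ i, 0 ≤ h i) → Summable (fun i => |h i| ^ p) →
    _root_.lpNorm (hlsOperator β h) q ≤ C * _root_.lpNorm h p

lemma hlsOperator_nonneg {β : ℝ} {h : (Fin n → ℤ) → ℝ} (hh : ∀ j, 0 ≤ h j) (i : Fin n → ℤ) :
    0 ≤ hlsOperator β h i :=
  tsum_nonneg fun j => by
    split_ifs
    · exact div_nonneg (hh j) (Real.rpow_nonneg (znorm_nonneg _) _)
    · exact le_rfl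

lemma hlsOperator_const_mul (β c : ℝ) (h : (Fin n → ℤ) → ℝ) :
    hlsOperator β (fun j => c * h j) = fun i => c * hlsOperator β h i := by
  ext i
  simp only [hlsOperator, ← tsum_mul_left, mul_ite, mul_zero, mul_div_assoc]

/-- The diagonal term is harmless: `znorm 0 ^ (-β) = 0` for `β ≠ 0`. -/
lemma hlsOperator_eq_sum {β : ℝ} (hβ : β ≠ 0) {h : (Fin n → ℤ) → ℝ} {K : Finset (Fin n → ℤ)}
    (hK : ∀ j ∉ K, h j = 0) (i : Fin n → ℤ) :
    hlsOperator β h i = ∑ j ∈ K, h j * znorm (i - j) ^ (-β) := by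
  rw [hlsOperator, tsum_eq_sum fun j hj => by simp [hK j hj]]
  refine Finset.sum_congr rfl fun j _ => ?_
  split_ifs with hji
  · rw [Real.rpow_neg (znorm_nonneg _), div_eq_mul_inv]
  · rw [not_not.mp hji, sub_self, znorm_zero, Real.zero_rpow (neg_ne_zero.mpr hβ), mul_zero]

lemma hlsOperator_mono {β : ℝ} (hβ : β ≠ 0) {h₁ h₂ : (Fin n → ℤ) → ℝ} {K : Finset (Fin n → ℤ)}
    (hK₁ : ∀ j ∉ K, h₁ j = 0) (hK₂ : ∀ j ∉ K, h₂ j = 0) (h₁₂ : ∀ j, h₁ j ≤ h₂ j)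
    (i : Fin n → ℤ) : hlsOperator β h₁ i ≤ hlsOperator β h₂ i := by
  rw [hlsOperator_eq_sum hβ hK₁, hlsOperator_eq_sum hβ hK₂]
  gcongr with j
  · exact Real.rpow_nonneg (znorm_nonneg _) _
  · exact h₁₂ j

lemma summable_hlsOperator_rpow {β q : ℝ} (hq : 0 < q) (hβq : (n : ℝ) < β * q)
    {h : (Fin n → ℤ) → ℝ} {K : Finset (Fin n → ℤ)} (hK : ∀ j ∉ K, h j = 0) :
    Summable fun i => |hlsOperator β h i| ^ q := by
  have hβ : β ≠ 0 := by
    rintro rfl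
    exact (Nat.cast_nonneg n).not_gt (by simpa using hβq)
  have hp : 0 < (ENNReal.ofReal q).toReal := by rwa [ENNReal.toReal_ofReal hq.le]
  have hw : Memℓp (fun v : Fin n → ℤ => znorm v ^ (-β)) (ENNReal.ofReal q) := by
    rw [memℓp_gen_iff hp, ENNReal.toReal_ofReal hq.le]
    refine (summable_znorm_rpow_neg hβq).congr fun v => ?_
    rw [Real.norm_of_nonneg (Real.rpow_nonneg (znorm_nonneg v) _),
      ← Real.rpow_mul (znorm_nonneg v), neg_mul]
  have hT : Memℓp (hlsOperator β h) (ENNReal.ofReal q) := by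
    rw [show hlsOperator β h = _ from funext (hlsOperator_eq_sum hβ hK)]
    refine Memℓp.finsetSum K (f := fun j i => h j * znorm (i - j) ^ (-β)) fun j _ => ?_
    have hwj : Memℓp (fun i : Fin n → ℤ => znorm (i - j) ^ (-β)) (ENNReal.ofReal q) := by
      rw [memℓp_gen_iff hp] at hw ⊢
      exact (Equiv.subRight j).summable_iff.mpr hw
    exact hwj.const_mul (h j)
  have := (memℓp_gen_iff hp).mp hT
  rw [ENNReal.toReal_ofReal hq.le] at this
  exact this

lemma HLSBounded.lpNorm_hlsOperator_rpow_le {β s a q C : ℝ} (hT : HLSBounded n β (s / a) q C)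
    {g : (Fin n → ℤ) → ℝ} (hg : ∀ j, 0 ≤ g j) {K : Finset (Fin n → ℤ)} (hK : ∀ j ∉ K, g j = 0)
    (ha : 0 < a) (hs : 0 < s) :
    _root_.lpNorm (hlsOperator β fun j => g j ^ a) q ≤ C * _root_.lpNorm g s ^ a := by
  have hsum : Summable fun i => |g i ^ a| ^ (s / a) :=
    summable_of_ne_finset_zero (s := K) fun j hj => by
      rw [hK j hj, Real.zero_rpow ha.ne', abs_zero, Real.zero_rpow (by positivity)]
  rw [← lpNorm_rpow_comp hg ha hs]
  exact hT _ (fun j => Real.rpow_nonneg (hg j) a) hsum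

lemma one_le_mul_lpNorm_hlsOperator {β r c : ℝ} (hr : 1 < r) (hβ : (n : ℝ) < β * (r / (r - 1)))
    {f G : (Fin n → ℤ) → ℝ} (hf : ∀ i, 0 ≤ f i) (hfn : _root_.lpNorm f r = 1) (hc : 0 ≤ c)
    {K : Finset (Fin n → ℤ)} (hK : ∀ j ∉ K, G j = 0)
    (hfT : ∀ i, f i ^ (r - 1) ≤ hlsOperator β (fun j => c * G j) i) :
    1 ≤ c * _root_.lpNorm (hlsOperator β G) (r / (r - 1)) := by
  have hq : 0 < r / (r - 1) := div_pos (by linarith) (by linarith)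
  calc (1 : ℝ) = _root_.lpNorm (fun i => f i ^ (r - 1)) (r / (r - 1)) := by
        rw [lpNorm_rpow_comp hf (by linarith) (by linarith), hfn, Real.one_rpow]
    _ ≤ _root_.lpNorm (hlsOperator β (fun j => c * G j)) (r / (r - 1)) :=
        lpNorm_le_lpNorm hq (fun i => Real.rpow_nonneg (hf i) _) hfT
          (summable_hlsOperator_rpow hq hβ fun j hj => mul_eq_zero_of_right _ (hK j hj))
    _ = c * _root_.lpNorm (hlsOperator β G) (r / (r - 1)) := by
        rw [hlsOperator_const_mul, lpNorm_const_mul _ hc hq]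

end

theorem stmt_9_general {n : ℕ} (hn : 1 ≤ n) (α r s ε C : ℝ) (N : ℕ)
    (hr : 1 < r) (hs : 1 < s)
    (hsup : 1 / r + 1 / s + ((n : ℝ) - α) / n > 2)
    (hε0 : 0 < ε) (hε1 : ε < 1) (hC : 0 < C)
    (f g : (Fin n → ℤ) → ℝ) (hf : ∀ i, 0 ≤ f i) (hg : ∀ i, 0 ≤ g i)
    (hfsupp : ∀ i, ¬ znorm i ≤ (N : ℝ) → f i = 0)
    (hgsupp : ∀ i, ¬ znorm i ≤ (N : ℝ) → g i = 0)
    (hfn : lpNorm f r = 1) (hgn : lpNorm g s = 1)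
    (hELf : ∀ i, znorm i ≤ (N : ℝ) →
      f i ^ (r - 1) = ∑' j, if j ≠ i then g j / znorm (i - j) ^ ((n : ℝ) - α) else 0)
    (hT : ∀ h : (Fin n → ℤ) → ℝ, (∀ i, 0 ≤ h i) →
      Summable (fun i => |h i| ^ (s / (1 - ε))) →
      _root_.lpNorm (fun i => ∑' j, if j ≠ i then h j / znorm (i - j) ^ ((n : ℝ) - α) else 0)
          (r / (r - 1))
        ≤ C * _root_.lpNorm h (s / (1 - ε))) :
    ∃ k : Fin n → ℤ, znorm k ≤ (N : ℝ) ∧ C ^ (-(1 / ε)) ≤ g k := by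
  have hq := lt_sub_mul_div_sub_one (by exact_mod_cast hn) hr hs hsup
  have hα : (n : ℝ) - α ≠ 0 := fun h => by rw [h, zero_mul] at hq; linarith
  have hgK : ∀ j ∉ znormBall n N, g j = 0 := fun j hj => hgsupp j (by simpa using hj)
  obtain ⟨k, hkK, hgk⟩ :=
    Finset.exists_mem_forall_le_of_forall_notMem_eq_zero ⟨0, by simp⟩ hg hgK
  let G := fun j => g j ^ (1 - ε)
  have hGK : ∀ j ∉ znormBall n N, G j = 0 := fun j hj => by
    simp only [G, hgK j hj, Real.zero_rpow (sub_ne_zero.mpr hε1.ne')]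
  have hfT : ∀ i, f i ^ (r - 1) ≤ hlsOperator ((n : ℝ) - α) (fun j => g k ^ ε * G j) i := by
    intro i
    by_cases hi : znorm i ≤ N
    · exact (hELf i hi).trans_le <| hlsOperator_mono hα hgK
        (fun j hj => mul_eq_zero_of_right _ (hGK j hj))
        (fun j => le_rpow_mul_rpow_one_sub (hg j) (hgk j) hε0.le) i
    · rw [hfsupp i hi, Real.zero_rpow (by linarith)]
      exact hlsOperator_nonneg (fun j => by positivity [hg k, hg j]) i
  have hTG : _root_.lpNorm (hlsOperator ((n : ℝ) - α) G) (r / (r - 1)) ≤ C := by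
    have := HLSBounded.lpNorm_hlsOperator_rpow_le hT hg hgK (sub_pos.mpr hε1) (by linarith)
    rwa [hgn, Real.one_rpow, mul_one] at this
  have hone : 1 ≤ g k ^ ε * C :=
    (one_le_mul_lpNorm_hlsOperator hr hq hf hfn (by positivity [hg k]) hGK hfT).trans
      (by gcongr; exact Real.rpow_nonneg (hg k) _)
  exact ⟨k, mem_znormBall.mp hkK, rpow_neg_one_div_le_of_one_le_rpow_mul hC (hg k) hε0 hone⟩

theorem stmt_9 {n : ℕ} (hn : 1 ≤ n) (α r s ε C : ℝ) (N : ℕ)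
    (hα0 : 0 < α) (hαn : α < n) (hr : 1 < r) (hs : 1 < s)
    (hsup : 1 / r + 1 / s + ((n : ℝ) - α) / n > 2)
    (hε : 2 + ε / s = 1 / r + 1 / s + ((n : ℝ) - α) / n)
    (hε0 : 0 < ε) (hε1 : ε < 1) (hC : 0 < C)
    (f g : (Fin n → ℤ) → ℝ) (hf : ∀ i, 0 ≤ f i) (hg : ∀ i, 0 ≤ g i)
    (hfsupp : ∀ i, ¬ znorm i ≤ (N : ℝ) → f i = 0)
    (hgsupp : ∀ i, ¬ znorm i ≤ (N : ℝ) → g i = 0)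
    (hfn : lpNorm f r = 1) (hgn : lpNorm g s = 1)
    (hELf : ∀ i, znorm i ≤ (N : ℝ) →
      f i ^ (r - 1) = ∑' j, if j ≠ i then g j / znorm (i - j) ^ ((n : ℝ) - α) else 0)
    (hELg : ∀ i, znorm i ≤ (N : ℝ) →
      g i ^ (s - 1) = ∑' j, if j ≠ i then f j / znorm (i - j) ^ ((n : ℝ) - α) else 0)
    (hT : ∀ h : (Fin n → ℤ) → ℝ, (∀ i, 0 ≤ h i) →
      Summable (fun i => |h i| ^ (s / (1 - ε))) →
      _root_.lpNorm (fun i => ∑' j, if j ≠ i then h j / znorm (i - j) ^ ((n : ℝ) - α) else 0)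
          (r / (r - 1))
        ≤ C * _root_.lpNorm h (s / (1 - ε))) :
    ∃ k : Fin n → ℤ, znorm k ≤ (N : ℝ) ∧ C ^ (-(1 / ε)) ≤ g k :=
  stmt_9_general hn α r s ε C N hr hs hsup hε0 hε1 hC f g hf hg hfsupp hgsupp hfn hgn hELf hT
end
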